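/- arXiv:1205.1567 — 2 statements merged into one kernel-verified Lean document; each statement's English description precedes it below -/
import Mathlib

section
/- The group G = ⟨P, Q ∣ P^7 = Q^8 = (Q·P^2)^3 = (Q·P^3)^2 = Q^4·P·Q^4·P^4·Q^4·P^2 = 1⟩ is generated by the two elements U = P^2·Q and T = P^3·Q. -/
/-- The relators of the presentation of the Hurwitz group of genus 17:
`⟨P, Q ∣ P⁷ = Q⁸ = (QP²)³ = (QP³)² = Q⁴PQ⁴P⁴Q⁴P² = 1⟩`. -/
def hurwitzRels : Set (FreeGroup (Fin 2)) :=
  letI P : FreeGroup (Fin 2) := FreeGroup.of 0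
  letI Q : FreeGroup (Fin 2) := FreeGroup.of 1
  {P ^ 7, Q ^ 8, (Q * P ^ 2) ^ 3, (Q * P ^ 3) ^ 2,
    Q ^ 4 * P * Q ^ 4 * P ^ 4 * Q ^ 4 * P ^ 2}

/-- The group `G = ⟨P, Q ∣ P⁷ = Q⁸ = (QP²)³ = (QP³)² = Q⁴PQ⁴P⁴Q⁴P² = 1⟩` is
generated by `U = P²Q` and `T = P³Q`. -/
theorem hurwitz_generated_by_UT :
    letI P : PresentedGroup hurwitzRels := PresentedGroup.of 0
    letI Q : PresentedGroup hurwitzRels := PresentedGroup.of 1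
    Subgroup.closure {P ^ 2 * Q, P ^ 3 * Q} = ⊤ := by
  set P : PresentedGroup hurwitzRels := PresentedGroup.of 0
  set Q : PresentedGroup hurwitzRels := PresentedGroup.of 1
  set H := Subgroup.closure {P ^ 2 * Q, P ^ 3 * Q} with hH
  have hU : P ^ 2 * Q ∈ H := Subgroup.subset_closure (Set.mem_insert _ _)
  have hT : P ^ 3 * Q ∈ H := Subgroup.subset_closure (Set.mem_insert_of_mem _ rfl)
  have hP : P ∈ H := by
    have : (P ^ 3 * Q) * (P ^ 2 * Q)⁻¹ = P := by group
    exact this ▸ H.mul_mem hT (H.inv_mem hU)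
  have hQ : Q ∈ H := by
    have : (P)⁻¹ ^ 2 * (P ^ 2 * Q) = Q := by group
    exact this ▸ H.mul_mem (H.pow_mem (H.inv_mem hP) 2) hU
  rw [← PresentedGroup.closure_range_of hurwitzRels]
  refine le_antisymm (by rw [PresentedGroup.closure_range_of]; exact le_top)
    ((Subgroup.closure_le H).2 ?_)
  rintro x ⟨i, rfl⟩
  fin_cases i
  · exact hP
  · exact hQ
end

section
/- The group generated by the permutations P = (1,13,2,11,4,5,8)(3,10,6,14,7,9,12) and Q = (1,7,3,4)(2,11,13,9,6,14,10,5) is not a simple group. -/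
/-- The permutation `P = (1,13,2,11,4,5,8)(3,10,6,14,7,9,12)` on the points `1,…,14`. -/
def permP : Equiv.Perm (Fin 15) :=
  List.formPerm ([1, 13, 2, 11, 4, 5, 8] : List (Fin 15)) *
    List.formPerm ([3, 10, 6, 14, 7, 9, 12] : List (Fin 15))

/-- The permutation `Q = (1,7,3,4)(2,11,13,9,6,14,10,5)` on the points `1,…,14`. -/
def permQ : Equiv.Perm (Fin 15) :=
  List.formPerm ([1, 7, 3, 4] : List (Fin 15)) *
    List.formPerm ([2, 11, 13, 9, 6, 14, 10, 5] : List (Fin 15))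

/-- The Hurwitz group of genus 17 realized as a permutation group. -/
def hurwitzPermGroup : Subgroup (Equiv.Perm (Fin 15)) := Subgroup.closure {permP, permQ}

/-!
The fourteen points fall into seven blocks of imprimitivity
`{1,3}, {2,6}, {4,7}, {5,9}, {8,12}, {10,13}, {11,14}`, which `P` and `Q` permute.
The kernel of the action on these blocks is therefore normal in the group (it is the `2³` of
`2³·PSL(2,7)`); it contains `Q⁴ ≠ 1` but not `P`, so it is neither trivial nor everything.
-/

theorem Subgroup.not_isSimpleGroup_of_le_normalizer {G : Type*} [Group G] {H N : Subgroup G}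
    (hH : H ≤ normalizer (N : Set G)) {x y : G} (hx : x ∈ N ⊓ H) (hx1 : x ≠ 1) (hy : y ∈ H)
    (hyN : y ∉ N) : ¬ IsSimpleGroup H := by
  rw [Subgroup.isSimpleGroup_iff]
  rintro ⟨-, hsimple⟩
  have hnormal : ((N ⊓ H).subgroupOf H).Normal := by
    rw [inf_subgroupOf_right]
    exact normal_subgroupOf_of_le_normalizer hH
  obtain hbot | htop := hsimple (N ⊓ H) inf_le_right hnormal
  · exact hx1 (mem_bot.1 (hbot.le hx))
  · exact hyN (htop.ge hy).1

namespace Equiv.Perm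

variable {α β : Type*} (π : α → β)

def permutingFibers : Subgroup (Perm α) where
  carrier := {g | ∀ x y, π (g x) = π (g y) ↔ π x = π y}
  mul_mem' hg hh x y := (hg _ _).trans (hh x y)
  one_mem' _ _ := Iff.rfl
  inv_mem' {g} hg x y := by simpa using (hg (g⁻¹ x) (g⁻¹ y)).symm

def fixingFibers : Subgroup (Perm α) where
  carrier := {g | ∀ x, π (g x) = π x}
  mul_mem' hg hh x := (hg _).trans (hh x)
  one_mem' _ := rfl
  inv_mem' {g} hg x := by simpa using (hg (g⁻¹ x)).symm

variable {π}

theorem mem_permutingFibers {g : Perm α} :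
    g ∈ permutingFibers π ↔ ∀ x y, π (g x) = π (g y) ↔ π x = π y :=
  Iff.rfl

theorem mem_fixingFibers {g : Perm α} : g ∈ fixingFibers π ↔ ∀ x, π (g x) = π x :=
  Iff.rfl

theorem conj_mem_fixingFibers {g h : Perm α} (hg : g ∈ permutingFibers π)
    (hh : h ∈ fixingFibers π) : g * h * g⁻¹ ∈ fixingFibers π := fun x => by
  simpa using (hg (h (g⁻¹ x)) (g⁻¹ x)).2 (hh _)

theorem permutingFibers_le_normalizer :
    permutingFibers π ≤ Subgroup.normalizer (fixingFibers π : Set (Perm α)) := fun g hg h =>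
  ⟨conj_mem_fixingFibers hg, fun hh => by
    simpa [mul_assoc] using conj_mem_fixingFibers (inv_mem hg) hh⟩

end Equiv.Perm

open Equiv.Perm

def hurwitzBlock : Fin 15 → Fin 15 := ![0, 1, 2, 1, 4, 5, 2, 4, 8, 5, 10, 11, 8, 10, 11]

theorem permP_mem_hurwitzPermGroup : permP ∈ hurwitzPermGroup :=
  Subgroup.subset_closure (by simp)

theorem permQ_mem_hurwitzPermGroup : permQ ∈ hurwitzPermGroup :=
  Subgroup.subset_closure (by simp)

theorem hurwitzPermGroup_le_permutingFibers : hurwitzPermGroup ≤ permutingFibers hurwitzBlock := by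
  rw [hurwitzPermGroup, Subgroup.closure_le]
  rintro g (rfl | rfl) <;> exact mem_permutingFibers.2 (by decide)

set_option maxRecDepth 4000 in
theorem permQ_pow_four_mem_fixingFibers : permQ ^ 4 ∈ fixingFibers hurwitzBlock :=
  mem_fixingFibers.2 (by decide)

set_option maxRecDepth 4000 in
theorem permQ_pow_four_ne_one : permQ ^ 4 ≠ 1 := by decide

theorem permP_not_mem_fixingFibers : permP ∉ fixingFibers hurwitzBlock := by
  rw [mem_fixingFibers]
  decide

/-- The group generated by the permutations `P = (1,13,2,11,4,5,8)(3,10,6,14,7,9,12)` and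
`Q = (1,7,3,4)(2,11,13,9,6,14,10,5)` is not simple. -/
theorem hurwitz_not_simple : ¬ IsSimpleGroup hurwitzPermGroup :=
  Subgroup.not_isSimpleGroup_of_le_normalizer
    (hurwitzPermGroup_le_permutingFibers.trans permutingFibers_le_normalizer)
    ⟨permQ_pow_four_mem_fixingFibers, pow_mem permQ_mem_hurwitzPermGroup 4⟩ permQ_pow_four_ne_one
    permP_mem_hurwitzPermGroup permP_not_mem_fixingFibers
end
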